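/- arXiv:1202.5296 — 6 statements merged into one kernel-verified Lean document; each statement's English description precedes it below -/
import Mathlib

section
/- For every β ∈ (0,1) and x ≥ 0, one has x^β = (β / Γ(1-β)) · ∫₀^∞ (1 - e^{-x z}) z^{-(1+β)} dz. -/
/-!
Write `(1 - e^{-xz}) z^{-(1+β)} = ∫₀ˣ z^{-β} e^{-uz} du` and exchange the order of integration
(Tonelli: the integrand is nonnegative). The inner integral in `z` is a Gamma integral,
`∫₀^∞ z^{-β} e^{-uz} dz = Γ(1-β) u^{β-1}`, and `∫₀ˣ u^{β-1} du = x^β / β`.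
-/

open MeasureTheory Real Set

lemma intervalIntegral_exp_neg_mul {z : ℝ} (hz : z ≠ 0) (x : ℝ) :
    ∫ u in (0:ℝ)..x, exp (-(u * z)) = (1 - exp (-(x * z))) / z := by
  have := intervalIntegral.integral_comp_mul_right exp (neg_ne_zero.mpr hz) (a := 0) (b := x)
  simp only [mul_neg, zero_mul, neg_zero, integral_exp, exp_zero, smul_eq_mul] at this
  rw [this, inv_neg, neg_mul, ← mul_neg, neg_sub, div_eq_inv_mul]

lemma integrableOn_rpow_mul_exp_neg_mul_Ioi {s u : ℝ} (hs : -1 < s) (hu : 0 < u) :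
    IntegrableOn (fun z : ℝ => z ^ s * exp (-(u * z))) (Ioi 0) := by
  simpa [rpow_one, neg_mul] using integrableOn_rpow_mul_exp_neg_mul_rpow hs one_pos hu

lemma integral_rpow_neg_mul_exp_neg_mul_Ioi {β u : ℝ} (hβ : β < 1) (hu : 0 < u) :
    ∫ z in Ioi (0:ℝ), z ^ (-β) * exp (-(u * z)) = Gamma (1 - β) * u ^ (β - 1) := by
  have h := integral_rpow_mul_exp_neg_mul_Ioi (a := 1 - β) (sub_pos.mpr hβ) hu
  rw [show (1:ℝ) - β - 1 = -β by ring] at h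
  rw [h, one_div, inv_rpow hu.le, ← rpow_neg hu.le, neg_sub, mul_comm]

lemma integrable_rpow_neg_mul_exp_neg_mul_prod {β : ℝ} (hβ0 : 0 < β) (hβ1 : β < 1) (x : ℝ) :
    Integrable (Function.uncurry fun u z : ℝ => z ^ (-β) * exp (-(u * z)))
      ((volume.restrict (Ioc 0 x)).prod (volume.restrict (Ioi 0))) := by
  have hmeas : AEStronglyMeasurable (Function.uncurry fun u z : ℝ => z ^ (-β) * exp (-(u * z)))
      ((volume.restrict (Ioc 0 x)).prod (volume.restrict (Ioi 0))) := by
    apply Measurable.aestronglyMeasurable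
    fun_prop
  refine (integrable_prod_iff hmeas).mpr ⟨?_, ?_⟩
  · filter_upwards [ae_restrict_mem measurableSet_Ioc] with u hu
    exact integrableOn_rpow_mul_exp_neg_mul_Ioi (by linarith) hu.1
  · have hrpow : IntegrableOn (fun u : ℝ => Gamma (1 - β) * u ^ (β - 1)) (Ioc 0 x) := by
      have := intervalIntegral.intervalIntegrable_rpow' (a := 0) (b := x) (r := β - 1)
        (by linarith)
      exact ((intervalIntegrable_iff.mp this).mono_set Ioc_subset_uIoc).const_mul _
    refine hrpow.congr ?_
    filter_upwards [ae_restrict_mem measurableSet_Ioc] with u hu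
    have hnorm : ∀ z ∈ Ioi (0:ℝ), ‖z ^ (-β) * exp (-(u * z))‖ = z ^ (-β) * exp (-(u * z)) :=
      fun z hz => norm_of_nonneg (mul_nonneg (rpow_nonneg (le_of_lt hz) _) (exp_nonneg _))
    simp only [Function.uncurry_apply_pair]
    rw [setIntegral_congr_fun measurableSet_Ioi hnorm,
      integral_rpow_neg_mul_exp_neg_mul_Ioi hβ1 hu.1]

lemma integral_one_sub_exp_neg_mul_mul_rpow {β x : ℝ} (hβ0 : 0 < β) (hβ1 : β < 1) (hx : 0 ≤ x) :
    ∫ z in Ioi (0:ℝ), (1 - exp (-(x * z))) * z ^ (-(1 + β)) = Gamma (1 - β) * (x ^ β / β) := by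
  have hinner : ∀ z ∈ Ioi (0:ℝ),
      (1 - exp (-(x * z))) * z ^ (-(1 + β)) = ∫ u in Ioc 0 x, z ^ (-β) * exp (-(u * z)) := by
    intro z hz
    rw [← intervalIntegral.integral_of_le hx, intervalIntegral.integral_const_mul,
      intervalIntegral_exp_neg_mul (ne_of_gt hz), show -(1 + β) = -β + -1 by ring,
      rpow_add hz, rpow_neg_one]
    ring
  calc ∫ z in Ioi (0:ℝ), (1 - exp (-(x * z))) * z ^ (-(1 + β))
      = ∫ z in Ioi (0:ℝ), ∫ u in Ioc 0 x, z ^ (-β) * exp (-(u * z)) :=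
        setIntegral_congr_fun measurableSet_Ioi hinner
    _ = ∫ u in Ioc 0 x, ∫ z in Ioi (0:ℝ), z ^ (-β) * exp (-(u * z)) :=
        (integral_integral_swap (integrable_rpow_neg_mul_exp_neg_mul_prod hβ0 hβ1 x)).symm
    _ = ∫ u in Ioc 0 x, Gamma (1 - β) * u ^ (β - 1) :=
        setIntegral_congr_fun measurableSet_Ioc
          fun u hu => integral_rpow_neg_mul_exp_neg_mul_Ioi hβ1 hu.1
    _ = Gamma (1 - β) * (x ^ β / β) := by
        rw [integral_const_mul, ← intervalIntegral.integral_of_le hx,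
          integral_rpow (Or.inl (by linarith)), sub_add_cancel, zero_rpow hβ0.ne', sub_zero]

theorem stmt0 (β x : ℝ) (hβ : β ∈ Set.Ioo (0:ℝ) 1) (hx : 0 ≤ x) :
    x ^ β = (β / Real.Gamma (1 - β)) *
      ∫ z in Set.Ioi (0:ℝ), (1 - Real.exp (-(x * z))) * z ^ (-(1 + β)) := by
  obtain ⟨hβ0, hβ1⟩ := hβ
  have hΓ : Gamma (1 - β) ≠ 0 := (Gamma_pos_of_pos (sub_pos.mpr hβ1)).ne'
  rw [integral_one_sub_exp_neg_mul_mul_rpow hβ0 hβ1 hx]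
  field_simp
end

section
/- Let X be a nonnegative random variable, α ∈ (0,1), and let Y be a random variable whose Laplace transform satisfies E[e^{-uY}] = E[e^{-(Γ(1-α)/α) u^α X}] for all u ≥ 0. Then for every β with 0 ≤ β < α, E[Y^β] = (Γ(1-β/α) Γ(1-α)^{β/α}) / (Γ(1-β) α^{β/α}) · E[X^{β/α}], whenever E[X^{β/α}] < ∞. -/
/-!
For `y ≥ 0` and `0 < s < 1`, integrating by parts against the Gamma integral gives
`∫₀^∞ (1 - e^{-uy}) u^{-s-1} du = y^s Γ(1-s)/s`. Taking expectations and using Tonelli,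
`E[Y^s] Γ(1-s)/s = ∫₀^∞ (1 - E[e^{-uY}]) u^{-s-1} du`, so a fractional moment is read off the
Laplace transform. With `s = β` the hypothesis replaces `E[e^{-uY}]` by `E[e^{-c u^α X}]`,
`c = Γ(1-α)/α`, and the substitution `w = c u^α` turns the integral into `c^{β/α}/α` times the
same representation of `E[X^{β/α}]` with `s = β/α`. That `Y ≥ 0` a.s. follows from
`E[e^{-nY}] ≤ 1` by Fatou's lemma.
-/

open MeasureTheory Real Set

open Filter Topology
open scoped ENNReal

lemma one_sub_exp_neg_nonneg {t : ℝ} (ht : 0 ≤ t) : 0 ≤ 1 - exp (-t) := by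
  linarith [exp_le_one_iff.mpr (neg_nonpos.mpr ht)]

lemma one_sub_exp_neg_le_one (t : ℝ) : 1 - exp (-t) ≤ 1 := by
  linarith [exp_pos (-t)]

lemma one_sub_exp_neg_mul_rpow_sub_one_le {t : ℝ} (ht : 0 < t) (r : ℝ) :
    (1 - exp (-t)) * t ^ (r - 1) ≤ t ^ r :=
  calc (1 - exp (-t)) * t ^ (r - 1) ≤ t * t ^ (r - 1) := by
        gcongr; linarith [add_one_le_exp (-t)]
    _ = t ^ r := by rw [rpow_sub_one ht.ne', mul_div_cancel₀ _ ht.ne']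

lemma integrableOn_one_sub_exp_neg_mul_rpow {s : ℝ} (hs₀ : 0 < s) (hs₁ : s < 1) :
    IntegrableOn (fun t ↦ (1 - exp (-t)) * t ^ (-s - 1)) (Ioi 0) := by
  have hmeas : AEStronglyMeasurable (fun t : ℝ ↦ (1 - exp (-t)) * t ^ (-s - 1)) :=
    (by fun_prop : Measurable fun t : ℝ ↦ (1 - exp (-t)) * t ^ (-s - 1)).aestronglyMeasurable
  rw [← Ioc_union_Ioi_eq_Ioi zero_le_one, integrableOn_union]
  constructor
  · have hdom : IntegrableOn (fun t : ℝ ↦ t ^ (-s)) (Ioc 0 1) :=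
      (intervalIntegral.intervalIntegrable_rpow' (by linarith)).1
    refine hdom.mono' hmeas.restrict ?_
    filter_upwards [ae_restrict_mem measurableSet_Ioc] with t ht
    rw [norm_of_nonneg (mul_nonneg (one_sub_exp_neg_nonneg ht.1.le) (rpow_nonneg ht.1.le _))]
    exact one_sub_exp_neg_mul_rpow_sub_one_le ht.1 _
  · refine (integrableOn_Ioi_rpow_of_lt (a := -s - 1) (by linarith) one_pos).mono'
      hmeas.restrict ?_
    filter_upwards [ae_restrict_mem measurableSet_Ioi] with t (ht : 1 < t)
    have hpow := rpow_nonneg (zero_le_one.trans ht.le) (-s - 1)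
    rw [norm_of_nonneg (mul_nonneg (one_sub_exp_neg_nonneg (by linarith)) hpow)]
    exact mul_le_of_le_one_left hpow (one_sub_exp_neg_le_one t)

lemma integral_one_sub_exp_neg_mul_rpow {s : ℝ} (hs₀ : 0 < s) (hs₁ : s < 1) :
    ∫ t in Ioi (0 : ℝ), (1 - exp (-t)) * t ^ (-s - 1) = Gamma (1 - s) / s := by
  have hGamma : ∫ t in Ioi (0 : ℝ), exp (-t) * t ^ (-s) = Gamma (1 - s) := by
    rw [Gamma_eq_integral (by linarith)]; norm_num
  have hu : ∀ t ∈ Ioi (0 : ℝ), HasDerivAt (fun t ↦ 1 - exp (-t)) (exp (-t)) t := fun t _ ↦ by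
    simpa using ((hasDerivAt_neg t).exp).const_sub 1
  have hv : ∀ t ∈ Ioi (0 : ℝ), HasDerivAt (fun t ↦ -t ^ (-s) / s) (t ^ (-s - 1)) t :=
    fun t ht ↦ ((hasDerivAt_rpow_const (p := -s) (Or.inl ht.ne')).neg.div_const s).congr_deriv
      (by field_simp)
  have hu'v : IntegrableOn (fun t ↦ exp (-t) * (-t ^ (-s) / s)) (Ioi 0) := by
    refine IntegrableOn.congr_fun
      ((GammaIntegral_convergent (s := 1 - s) (by linarith)).neg.div_const s)
      (fun t _ ↦ ?_) measurableSet_Ioi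
    simp only [sub_sub_cancel_left, Pi.neg_apply]; ring
  have h_zero : Tendsto (fun t ↦ (1 - exp (-t)) * t ^ (-s)) (𝓝[>] 0) (𝓝 0) := by
    have hpow : Tendsto (fun t : ℝ ↦ t ^ (1 - s)) (𝓝[>] 0) (𝓝 0) := by
      simpa [zero_rpow (by linarith : 1 - s ≠ 0)] using
        (continuousAt_rpow_const 0 (1 - s) (Or.inr (by linarith))).tendsto.mono_left
          nhdsWithin_le_nhds
    refine squeeze_zero' ?_ ?_ hpow
    · filter_upwards [self_mem_nhdsWithin] with t (ht : 0 < t)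
      exact mul_nonneg (one_sub_exp_neg_nonneg ht.le) (rpow_nonneg ht.le _)
    · filter_upwards [self_mem_nhdsWithin] with t (ht : 0 < t)
      simpa using one_sub_exp_neg_mul_rpow_sub_one_le ht (1 - s)
  have h_infty : Tendsto (fun t ↦ (1 - exp (-t)) * t ^ (-s)) atTop (𝓝 0) := by
    refine squeeze_zero' ?_ ?_ (tendsto_rpow_neg_atTop hs₀)
    · filter_upwards [eventually_gt_atTop 0] with t ht
      exact mul_nonneg (one_sub_exp_neg_nonneg ht.le) (rpow_nonneg ht.le _)
    · filter_upwards [eventually_gt_atTop 0] with t ht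
      exact mul_le_of_le_one_left (rpow_nonneg ht.le _) (one_sub_exp_neg_le_one t)
  have hscale : ∀ l : Filter ℝ, Tendsto (fun t ↦ (1 - exp (-t)) * t ^ (-s)) l (𝓝 0) →
      Tendsto ((fun t ↦ 1 - exp (-t)) * fun t ↦ -t ^ (-s) / s) l (𝓝 0) := fun l h ↦ by
    convert h.mul_const (-1 / s) using 1
    · funext t; simp only [Pi.mul_apply]; ring
    · rw [zero_mul]
  have hparts := integral_Ioi_mul_deriv_eq_deriv_mul hu hv
    (integrableOn_one_sub_exp_neg_mul_rpow hs₀ hs₁) hu'v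
    (hscale _ h_zero) (hscale _ h_infty)
  rw [hparts, ← hGamma, ← integral_div, sub_self, zero_sub, ← integral_neg]
  congr 1 with t
  ring

lemma lintegral_Ioi_comp_mul_rpow (f : ℝ → ℝ≥0∞) {a c : ℝ} (ha : 0 < a) (hc : 0 < c) :
    ∫⁻ u in Ioi 0, ENNReal.ofReal (c * a * u ^ (a - 1)) * f (c * u ^ a) = ∫⁻ w in Ioi 0, f w := by
  have himage : (fun u : ℝ ↦ c * u ^ a) '' Ioi 0 = Ioi 0 := by
    ext w
    refine ⟨?_, fun hw ↦ ⟨(w / c) ^ a⁻¹, rpow_pos_of_pos (div_pos hw hc) _, ?_⟩⟩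
    · rintro ⟨u, hu, rfl⟩
      exact mul_pos hc (rpow_pos_of_pos hu a)
    · show c * ((w / c) ^ a⁻¹) ^ a = w
      rw [← rpow_mul (div_pos hw hc).le, inv_mul_cancel₀ ha.ne', rpow_one,
        mul_div_cancel₀ _ hc.ne']
  have hderiv : ∀ u ∈ Ioi (0 : ℝ),
      HasDerivWithinAt (fun u ↦ c * u ^ a) (c * a * u ^ (a - 1)) (Ioi 0) u := fun u hu ↦
    (((hasDerivAt_rpow_const (Or.inl (ne_of_gt hu))).const_mul c).congr_deriv
      (mul_assoc _ _ _).symm).hasDerivWithinAt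
  have hinj : InjOn (fun u : ℝ ↦ c * u ^ a) (Ioi 0) :=
    fun u hu v hv huv ↦ ((strictMonoOn_rpow_Ici_of_exponent_pos ha).injOn
      (mem_Ici.mpr (le_of_lt hu)) (mem_Ici.mpr (le_of_lt hv)) (mul_left_cancel₀ hc.ne' huv))
  conv_rhs =>
    rw [← himage, lintegral_image_eq_lintegral_abs_deriv_mul measurableSet_Ioi hderiv hinj]
  refine setLIntegral_congr_fun measurableSet_Ioi (fun u (hu : 0 < u) ↦ ?_)
  rw [abs_of_pos (by positivity)]

lemma lintegral_Ioi_mul_rpow_comp_mul_rpow (g : ℝ → ℝ) {a b c : ℝ} (ha : 0 < a) (hc : 0 < c) :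
    ∫⁻ u in Ioi 0, ENNReal.ofReal (g (c * u ^ a) * u ^ (-b - 1))
      = ENNReal.ofReal (c ^ (b / a) / a) *
          ∫⁻ w in Ioi 0, ENNReal.ofReal (g w * w ^ (-(b / a) - 1)) := by
  conv_rhs => rw [← lintegral_Ioi_comp_mul_rpow _ ha hc]
  rw [← lintegral_const_mul' _ _ ENNReal.ofReal_ne_top]
  refine setLIntegral_congr_fun measurableSet_Ioi (fun u (hu : 0 < u) ↦ ?_)
  rw [← ENNReal.ofReal_mul (by positivity), ← ENNReal.ofReal_mul (by positivity)]
  congr 1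
  have hc' : c ^ (b / a) * c ^ (-(b / a) - 1) * c = 1 := by
    rw [← rpow_add hc, show b / a + (-(b / a) - 1) = -1 by ring, rpow_neg_one,
      inv_mul_cancel₀ hc.ne']
  have hu' : u ^ (a - 1) * u ^ (-b - a) = u ^ (-b - 1) := by
    rw [← rpow_add hu]; ring_nf
  rw [mul_rpow hc.le (rpow_nonneg hu.le a), ← rpow_mul hu.le,
    show a * (-(b / a) - 1) = -b - a by field_simp, ← hu']
  calc _ = (c ^ (b / a) * c ^ (-(b / a) - 1) * c) * (a / a)
        * (g (c * u ^ a) * (u ^ (a - 1) * u ^ (-b - a))) := by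
        rw [hc', div_self ha.ne']; ring
    _ = _ := by ring

lemma lintegral_one_sub_exp_neg_mul_mul_rpow {s y : ℝ} (hs₀ : 0 < s) (hs₁ : s < 1) (hy : 0 ≤ y) :
    ∫⁻ u in Ioi 0, ENNReal.ofReal ((1 - exp (-(u * y))) * u ^ (-s - 1))
      = ENNReal.ofReal (y ^ s) * ENNReal.ofReal (Gamma (1 - s) / s) := by
  rcases hy.eq_or_lt with rfl | hy
  · simp [zero_rpow hs₀.ne']
  have hnonneg : 0 ≤ᵐ[volume.restrict (Ioi 0)] fun t : ℝ ↦ (1 - exp (-t)) * t ^ (-s - 1) := by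
    filter_upwards [ae_restrict_mem measurableSet_Ioi] with t (ht : 0 < t)
    exact mul_nonneg (one_sub_exp_neg_nonneg ht.le) (rpow_nonneg ht.le _)
  have h := lintegral_Ioi_mul_rpow_comp_mul_rpow (fun w ↦ 1 - exp (-w)) (b := s) one_pos hy
  simp only [rpow_one, div_one] at h
  simp_rw [mul_comm _ y, h, ← ofReal_integral_eq_lintegral_ofReal
    (integrableOn_one_sub_exp_neg_mul_rpow hs₀ hs₁) hnonneg,
    integral_one_sub_exp_neg_mul_rpow hs₀ hs₁]

section Laplace

variable {Ω : Type*} [MeasurableSpace Ω]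

lemma ae_nonneg_of_lintegral_exp_neg_mul_le {μ : Measure Ω} {Y : Ω → ℝ} (hYm : Measurable Y)
    {C : ℝ≥0∞} (hC : C ≠ ⊤) (h : ∀ n : ℕ, ∫⁻ ω, ENNReal.ofReal (exp (-(n * Y ω))) ∂μ ≤ C) :
    0 ≤ᵐ[μ] Y := by
  set S := {ω | Y ω < 0}
  have hlim : ∀ ω ∈ S, liminf (fun n : ℕ ↦ ENNReal.ofReal (exp (-(n * Y ω)))) atTop = ⊤ :=
    fun ω (hω : Y ω < 0) ↦ (ENNReal.tendsto_ofReal_atTop.comp <| tendsto_exp_atTop.comp <|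
      (tendsto_natCast_atTop_atTop.atTop_mul_const (neg_pos.mpr hω)).congr
        fun n ↦ (neg_mul_eq_mul_neg _ _).symm).liminf_eq
  have hS : ⊤ * μ S ≤ C :=
    calc ⊤ * μ S
        = ∫⁻ ω in S, liminf (fun n : ℕ ↦ ENNReal.ofReal (exp (-(n * Y ω)))) atTop ∂μ := by
          rw [setLIntegral_congr_fun (measurableSet_lt hYm measurable_const) hlim,
            setLIntegral_const]
      _ ≤ ∫⁻ ω, liminf (fun n : ℕ ↦ ENNReal.ofReal (exp (-(n * Y ω)))) atTop ∂μ :=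
          setLIntegral_le_lintegral _ _
      _ ≤ liminf (fun n : ℕ ↦ ∫⁻ ω, ENNReal.ofReal (exp (-(n * Y ω))) ∂μ) atTop :=
          lintegral_liminf_le fun n ↦ by fun_prop
      _ ≤ C := (liminf_le_liminf (Eventually.of_forall h)).trans (liminf_const C).le
  have hS0 : μ S = 0 := by
    by_contra hne
    exact hC (top_le_iff.mp (ENNReal.top_mul hne ▸ hS))
  simpa only [EventuallyLE, Pi.zero_apply, ae_iff, not_le] using hS0

variable (P : Measure Ω) [IsProbabilityMeasure P]

lemma integrable_exp_neg_mul_of_ae_nonneg {Y : Ω → ℝ} (hYm : Measurable Y) (hY : 0 ≤ᵐ[P] Y)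
    {u : ℝ} (hu : 0 ≤ u) : Integrable (fun ω ↦ exp (-(u * Y ω))) P := by
  refine (integrable_const 1).mono' (by fun_prop) ?_
  filter_upwards [hY] with ω hω
  rw [norm_of_nonneg (exp_pos _).le, exp_le_one_iff, neg_nonpos]
  exact mul_nonneg hu hω

lemma integral_exp_neg_mul_le_one_of_ae_nonneg {Y : Ω → ℝ} (hY : 0 ≤ᵐ[P] Y) {u : ℝ}
    (hu : 0 ≤ u) : ∫ ω, exp (-(u * Y ω)) ∂P ≤ 1 := by
  calc ∫ ω, exp (-(u * Y ω)) ∂P ≤ ∫ _, 1 ∂P := by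
        refine integral_mono_of_nonneg (ae_of_all _ fun _ ↦ (exp_pos _).le) (integrable_const 1) ?_
        filter_upwards [hY] with ω hω
        rw [exp_le_one_iff, neg_nonpos]
        exact mul_nonneg hu hω
    _ = 1 := by simp

lemma lintegral_one_sub_integral_exp_neg_mul_mul_rpow {Y : Ω → ℝ} (hYm : Measurable Y)
    (hY : 0 ≤ᵐ[P] Y) {s : ℝ} (hs₀ : 0 < s) (hs₁ : s < 1) :
    ∫⁻ u in Ioi 0, ENNReal.ofReal ((1 - ∫ ω, exp (-(u * Y ω)) ∂P) * u ^ (-s - 1))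
      = (∫⁻ ω, ENNReal.ofReal (Y ω ^ s) ∂P) * ENNReal.ofReal (Gamma (1 - s) / s) :=
  calc _ = ∫⁻ u in Ioi 0, ∫⁻ ω, ENNReal.ofReal ((1 - exp (-(u * Y ω))) * u ^ (-s - 1)) ∂P := by
        refine setLIntegral_congr_fun measurableSet_Ioi fun u (hu : 0 < u) ↦ ?_
        have hexp := integrable_exp_neg_mul_of_ae_nonneg P hYm hY hu.le
        have hint : Integrable (fun ω ↦ (1 - exp (-(u * Y ω))) * u ^ (-s - 1)) P :=
          ((integrable_const 1).sub hexp).mul_const _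
        rw [← ofReal_integral_eq_lintegral_ofReal hint, integral_mul_const,
          integral_sub (integrable_const 1) hexp, integral_const, probReal_univ, one_smul]
        filter_upwards [hY] with ω hω
        exact mul_nonneg (one_sub_exp_neg_nonneg (mul_nonneg hu.le hω)) (rpow_nonneg hu.le _)
    _ = ∫⁻ ω, (∫⁻ u in Ioi 0, ENNReal.ofReal ((1 - exp (-(u * Y ω))) * u ^ (-s - 1))) ∂P :=
        lintegral_lintegral_swap (by fun_prop)
    _ = ∫⁻ ω, ENNReal.ofReal (Y ω ^ s) * ENNReal.ofReal (Gamma (1 - s) / s) ∂P :=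
        lintegral_congr_ae (hY.mono fun ω hω ↦ lintegral_one_sub_exp_neg_mul_mul_rpow hs₀ hs₁ hω)
    _ = _ := lintegral_mul_const' _ _ ENNReal.ofReal_ne_top

lemma ae_nonneg_of_integral_exp_neg_mul_eq {X Y : Ω → ℝ} (hXm : Measurable X)
    (hYm : Measurable Y) (hX : 0 ≤ᵐ[P] X) {φ : ℝ → ℝ} (hφ : ∀ u, 0 ≤ u → 0 ≤ φ u)
    (hLap : ∀ u, 0 ≤ u → ∫ ω, exp (-(u * Y ω)) ∂P = ∫ ω, exp (-(φ u * X ω)) ∂P) :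
    0 ≤ᵐ[P] Y := by
  refine ae_nonneg_of_lintegral_exp_neg_mul_le hYm ENNReal.one_ne_top fun n ↦ ?_
  have hu := hφ n n.cast_nonneg
  -- positivity of the right-hand side rules out the junk value `0` of a non-integrable integral
  have hint : Integrable (fun ω ↦ exp (-(n * Y ω))) P := Integrable.of_integral_ne_zero <|
    hLap n n.cast_nonneg ▸ (integral_exp_pos (integrable_exp_neg_mul_of_ae_nonneg P hXm hX hu)).ne'
  rw [← ofReal_integral_eq_lintegral_ofReal hint (ae_of_all _ fun _ ↦ (exp_pos _).le),
    hLap n n.cast_nonneg]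
  exact ENNReal.ofReal_le_one.mpr (integral_exp_neg_mul_le_one_of_ae_nonneg P hX hu)

end Laplace

theorem stmt2_general {Ω : Type*} [MeasurableSpace Ω] (P : Measure Ω) [IsProbabilityMeasure P]
    (X Y : Ω → ℝ) (hXm : Measurable X) (hYm : Measurable Y) (hX : ∀ ω, 0 ≤ X ω)
    (α β : ℝ) (hα : α ∈ Set.Ioo (0:ℝ) 1) (hβ : 0 ≤ β) (hβα : β < α)
    (hLap : ∀ u : ℝ, 0 ≤ u →
      ∫ ω, Real.exp (-(u * Y ω)) ∂P
        = ∫ ω, Real.exp (-(Real.Gamma (1 - α) / α * u ^ α * X ω)) ∂P) :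
    ∫ ω, Y ω ^ β ∂P
      = (Real.Gamma (1 - β / α) * Real.Gamma (1 - α) ^ (β / α))
          / (Real.Gamma (1 - β) * α ^ (β / α)) * ∫ ω, X ω ^ (β / α) ∂P := by
  obtain ⟨hα₀, hα₁⟩ := hα
  rcases hβ.eq_or_lt with rfl | hβ₀
  · simp
  have hΓα : 0 < Gamma (1 - α) := Gamma_pos_of_pos (by linarith)
  have hc : 0 < Gamma (1 - α) / α := div_pos hΓα hα₀
  have hX' : 0 ≤ᵐ[P] X := ae_of_all _ hX
  have hY' : 0 ≤ᵐ[P] Y := ae_nonneg_of_integral_exp_neg_mul_eq P hXm hYm hX'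
    (fun u _ ↦ by positivity) hLap
  have hmomY := lintegral_one_sub_integral_exp_neg_mul_mul_rpow P hYm hY' hβ₀ (hβα.trans hα₁)
  have hmomX := lintegral_one_sub_integral_exp_neg_mul_mul_rpow P hXm hX' (div_pos hβ₀ hα₀)
    ((div_lt_one hα₀).mpr hβα)
  have hscale := lintegral_Ioi_mul_rpow_comp_mul_rpow
    (fun w ↦ 1 - ∫ ω, exp (-(w * X ω)) ∂P) (b := β) hα₀ hc
  rw [setLIntegral_congr_fun measurableSet_Ioi fun u (hu : 0 < u) ↦ by rw [hLap u hu.le],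
    hscale, hmomX] at hmomY
  have hreal := congrArg ENNReal.toReal hmomY
  have hΓβ : 0 < Gamma (1 - β) := Gamma_pos_of_pos (by linarith)
  have hΓβα : 0 < Gamma (1 - β / α) := Gamma_pos_of_pos (sub_pos.mpr ((div_lt_one hα₀).mpr hβα))
  simp only [ENNReal.toReal_mul] at hreal
  rw [ENNReal.toReal_ofReal (by positivity), ENNReal.toReal_ofReal (by positivity),
    ENNReal.toReal_ofReal (by positivity)] at hreal
  rw [integral_eq_lintegral_of_nonneg_ae (hY'.mono fun ω hω ↦ rpow_nonneg hω β)
      (hYm.pow_const β).aestronglyMeasurable,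
    integral_eq_lintegral_of_nonneg_ae (hX'.mono fun ω hω ↦ rpow_nonneg hω _)
      (hXm.pow_const _).aestronglyMeasurable]
  rw [div_rpow hΓα.le hα₀.le] at hreal
  field_simp at hreal ⊢
  exact hreal.symm

theorem stmt2 {Ω : Type*} [MeasurableSpace Ω] (P : Measure Ω) [IsProbabilityMeasure P]
    (X Y : Ω → ℝ) (hXm : Measurable X) (hYm : Measurable Y) (hX : ∀ ω, 0 ≤ X ω)
    (α β : ℝ) (hα : α ∈ Set.Ioo (0:ℝ) 1) (hβ : 0 ≤ β) (hβα : β < α)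
    (hLap : ∀ u : ℝ, 0 ≤ u →
      ∫ ω, Real.exp (-(u * Y ω)) ∂P
        = ∫ ω, Real.exp (-(Real.Gamma (1 - α) / α * u ^ α * X ω)) ∂P)
    (hInt : Integrable (fun ω => X ω ^ (β / α)) P) :
    ∫ ω, Y ω ^ β ∂P
      = (Real.Gamma (1 - β / α) * Real.Gamma (1 - α) ^ (β / α))
          / (Real.Gamma (1 - β) * α ^ (β / α)) * ∫ ω, X ω ^ (β / α) ∂P :=
  stmt2_general P X Y hXm hYm hX α β hα hβ hβα hLap
end

section
/- Let x, y, z ∈ ℝ^d and r > 0 with x, y ∈ B(z, r) (closed Euclidean ball). Then there exist signs ε₁,…,ε_d ∈ {-1, 1} such that the set { u ∈ B((x+y)/2, |x-y|/2) : ε_i (u_i - (x_i+y_i)/2) ≥ 0 for all i } is contained in B(z, r). -/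
/-!
Let `m` be the midpoint of `x` and `y`, and choose the orthant at `m` that points towards `z`
coordinatewise, so that `⟪u - m, m - z⟫ ≤ 0` for every `u` in it. Then
`‖u - z‖² ≤ ‖u - m‖² + ‖m - z‖² ≤ ‖x - y‖² / 4 + ‖m - z‖² = (‖x - z‖² + ‖y - z‖²) / 2 ≤ r²`,
the equality being Apollonius's theorem.
-/

open Metric Set
open scoped RealInnerProductSpace

section

variable {V P : Type*} [NormedAddCommGroup V] [InnerProductSpace ℝ V] [MetricSpace P]
  [NormedAddTorsor V P]

theorem dist_sq_le_of_inner_vsub_nonpos {u m z : P} (h : ⟪u -ᵥ m, m -ᵥ z⟫ ≤ 0) :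
    dist u z ^ 2 ≤ dist u m ^ 2 + dist m z ^ 2 := by
  rw [dist_eq_norm_vsub V, dist_eq_norm_vsub V, dist_eq_norm_vsub V,
    ← vsub_add_vsub_cancel u m z, norm_add_sq_real]
  linarith

theorem mem_closedBall_of_inner_vsub_midpoint_nonpos {x y z u : P} {r : ℝ}
    (hx : x ∈ closedBall z r) (hy : y ∈ closedBall z r)
    (hu : u ∈ closedBall (midpoint ℝ x y) (dist x y / 2))
    (h : ⟪u -ᵥ midpoint ℝ x y, midpoint ℝ x y -ᵥ z⟫ ≤ 0) :
    u ∈ closedBall z r := by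
  rw [mem_closedBall] at hx hy hu ⊢
  have hr : 0 ≤ r := dist_nonneg.trans hx
  have apollonius :=
    EuclideanGeometry.dist_sq_add_dist_sq_eq_two_mul_dist_midpoint_sq_add_half_dist_sq z x y
  have hu_sq : dist u (midpoint ℝ x y) ^ 2 ≤ (dist x y / 2) ^ 2 :=
    pow_le_pow_left₀ dist_nonneg hu 2
  refine le_of_sq_le_sq ?_ hr
  calc dist u z ^ 2 ≤ dist u (midpoint ℝ x y) ^ 2 + dist (midpoint ℝ x y) z ^ 2 :=
        dist_sq_le_of_inner_vsub_nonpos h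
    _ ≤ (dist z x ^ 2 + dist z y ^ 2) / 2 := by
        rw [dist_comm (midpoint ℝ x y) z]; linarith
    _ ≤ r ^ 2 := by
        rw [dist_comm z x, dist_comm z y]
        nlinarith [pow_le_pow_left₀ dist_nonneg hx 2, pow_le_pow_left₀ dist_nonneg hy 2]

end

theorem EuclideanSpace.inner_nonpos_of_sign_pattern {ι : Type*} [Fintype ι]
    {a b : EuclideanSpace ℝ ι} (ε : ι → ℝ) (hε : ∀ i, ε i ≠ 0)
    (ha : ∀ i, 0 ≤ ε i * a i) (hb : ∀ i, ε i * b i ≤ 0) : ⟪a, b⟫ ≤ 0 := by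
  rw [PiLp.inner_apply]
  refine Finset.sum_nonpos fun i _ =>
    nonpos_of_mul_nonpos_left (b := ε i ^ 2) ?_ (by positivity [hε i])
  calc ⟪a i, b i⟫ * ε i ^ 2 = (ε i * a i) * (ε i * b i) := by
        simp only [RCLike.inner_apply, Real.ringHom_apply]; ring
    _ ≤ 0 := mul_nonpos_of_nonneg_of_nonpos (ha i) (hb i)

theorem exists_eq_one_or_eq_neg_one_mul_nonpos (t : ℝ) :
    ∃ e : ℝ, (e = 1 ∨ e = -1) ∧ e * t ≤ 0 := by
  rcases le_total t 0 with ht | ht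
  · exact ⟨1, .inl rfl, by linarith⟩
  · exact ⟨-1, .inr rfl, by linarith⟩

theorem stmt8_general {d : ℕ} (x y z : EuclideanSpace ℝ (Fin d)) (r : ℝ)
    (hx : x ∈ Metric.closedBall z r) (hy : y ∈ Metric.closedBall z r) :
    ∃ ε : Fin d → ℝ, (∀ i, ε i = 1 ∨ ε i = -1) ∧
      {u : EuclideanSpace ℝ (Fin d) |
          u ∈ Metric.closedBall ((1/2 : ℝ) • (x + y)) (‖x - y‖ / 2) ∧
          ∀ i, 0 ≤ ε i * (u i - ((1/2 : ℝ) • (x + y)) i)}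
        ⊆ Metric.closedBall z r := by
  have hm : midpoint ℝ x y = (1/2 : ℝ) • (x + y) := by
    rw [midpoint_eq_smul_add, invOf_eq_inv, one_div]
  set m := (1/2 : ℝ) • (x + y)
  choose ε hε hεm using fun i => exists_eq_one_or_eq_neg_one_mul_nonpos (m i - z i)
  refine ⟨ε, hε, fun u ⟨hu, hu_orthant⟩ => ?_⟩
  refine mem_closedBall_of_inner_vsub_midpoint_nonpos hx hy (by rwa [hm, dist_eq_norm]) ?_
  rw [hm]
  refine EuclideanSpace.inner_nonpos_of_sign_pattern ε
    (fun i => by rcases hε i with h | h <;> simp [h]) ?_ ?_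
  · simpa only [vsub_eq_sub, PiLp.sub_apply] using hu_orthant
  · simpa only [vsub_eq_sub, PiLp.sub_apply] using hεm

theorem stmt8 {d : ℕ} (x y z : EuclideanSpace ℝ (Fin d)) (r : ℝ) (hr : 0 < r)
    (hx : x ∈ Metric.closedBall z r) (hy : y ∈ Metric.closedBall z r) :
    ∃ ε : Fin d → ℝ, (∀ i, ε i = 1 ∨ ε i = -1) ∧
      {u : EuclideanSpace ℝ (Fin d) |
          u ∈ Metric.closedBall ((1/2 : ℝ) • (x + y)) (‖x - y‖ / 2) ∧
          ∀ i, 0 ≤ ε i * (u i - ((1/2 : ℝ) • (x + y)) i)}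
        ⊆ Metric.closedBall z r :=
  stmt8_general x y z r hx hy
end

section
/- Let x, y ∈ B(z, r) with c = (x+y)/2 ≠ z. Then the half-ball B(c, |x-y|/2) ∩ {u : ⟨u - c, z - c⟩ ≥ 0} is contained in B(z, r). -/
/-!
The half-ball lies on the side of the hyperplane through `c` facing `z`, so the angle at `c`
between `u` and `z` is at most a right angle and `‖u - z‖² ≤ ‖u - c‖² + ‖z - c‖²`.
With `‖u - c‖ ≤ ‖x - y‖ / 2`, Apollonius's theorem bounds the right-hand side by
`(‖x - z‖² + ‖y - z‖²) / 2 ≤ r²`.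
-/

open Metric Set
open scoped RealInnerProductSpace

section HalfBall

variable {V : Type*} [NormedAddCommGroup V] [InnerProductSpace ℝ V]

theorem dist_sq_le_dist_sq_add_dist_sq_of_inner_nonneg {u c z : V} (h : 0 ≤ ⟪u - c, z - c⟫) :
    dist u z ^ 2 ≤ dist u c ^ 2 + dist z c ^ 2 := by
  have hsplit : u - z = (u - c) - (z - c) := by abel
  rw [dist_eq_norm, dist_eq_norm, dist_eq_norm, hsplit, norm_sub_sq_real]
  linarith

theorem dist_midpoint_sq_add_half_dist_sq_le {x y z : V} {r : ℝ}
    (hx : dist x z ≤ r) (hy : dist y z ≤ r) :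
    dist z (midpoint ℝ x y) ^ 2 + (dist x y / 2) ^ 2 ≤ r ^ 2 := by
  have hapollonius :=
    EuclideanGeometry.dist_sq_add_dist_sq_eq_two_mul_dist_midpoint_sq_add_half_dist_sq z x y
  rw [dist_comm z x, dist_comm z y] at hapollonius
  have hxr : dist x z ^ 2 ≤ r ^ 2 := pow_le_pow_left₀ dist_nonneg hx 2
  have hyr : dist y z ^ 2 ≤ r ^ 2 := pow_le_pow_left₀ dist_nonneg hy 2
  linarith

theorem closedBall_midpoint_inter_halfspace_subset_closedBall {x y z : V} {r : ℝ}
    (hx : x ∈ closedBall z r) (hy : y ∈ closedBall z r) :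
    closedBall (midpoint ℝ x y) (dist x y / 2)
        ∩ {u | 0 ≤ ⟪u - midpoint ℝ x y, z - midpoint ℝ x y⟫} ⊆ closedBall z r := by
  rintro u ⟨hu, hangle⟩
  rw [mem_closedBall] at hx hy hu ⊢
  have hr : 0 ≤ r := dist_nonneg.trans hx
  have hsq : dist u z ^ 2 ≤ r ^ 2 :=
    calc dist u z ^ 2
        ≤ dist u (midpoint ℝ x y) ^ 2 + dist z (midpoint ℝ x y) ^ 2 :=
          dist_sq_le_dist_sq_add_dist_sq_of_inner_nonneg hangle
      _ ≤ (dist x y / 2) ^ 2 + dist z (midpoint ℝ x y) ^ 2 := by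
          gcongr
      _ ≤ r ^ 2 := by linarith [dist_midpoint_sq_add_half_dist_sq_le hx hy]
  exact (pow_le_pow_iff_left₀ dist_nonneg hr two_ne_zero).mp hsq

end HalfBall

theorem stmt10_general {d : ℕ} (x y z : EuclideanSpace ℝ (Fin d)) (r : ℝ)
    (hx : x ∈ Metric.closedBall z r) (hy : y ∈ Metric.closedBall z r) :
    Metric.closedBall ((1/2 : ℝ) • (x + y)) (‖x - y‖ / 2)
        ∩ {u : EuclideanSpace ℝ (Fin d) |
            0 ≤ ⟪u - (1/2 : ℝ) • (x + y), z - (1/2 : ℝ) • (x + y)⟫}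
      ⊆ Metric.closedBall z r := by
  have hmid : (1/2 : ℝ) • (x + y) = midpoint ℝ x y := by
    rw [midpoint_eq_smul_add, one_div, invOf_eq_inv]
  rw [hmid, ← dist_eq_norm]
  exact closedBall_midpoint_inter_halfspace_subset_closedBall hx hy

theorem stmt10 {d : ℕ} (x y z : EuclideanSpace ℝ (Fin d)) (r : ℝ)
    (hx : x ∈ Metric.closedBall z r) (hy : y ∈ Metric.closedBall z r)
    (hc : (1/2 : ℝ) • (x + y) ≠ z) :
    Metric.closedBall ((1/2 : ℝ) • (x + y)) (‖x - y‖ / 2)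
        ∩ {u : EuclideanSpace ℝ (Fin d) |
            0 ≤ ⟪u - (1/2 : ℝ) • (x + y), z - (1/2 : ℝ) • (x + y)⟫}
      ⊆ Metric.closedBall z r :=
  stmt10_general x y z r hx hy
end

section
/- Let (A_n)_{n≥0} be a nonnegative stochastic process adapted to a filtration (F_n), and (b_n) a sequence in [0,1) with Σ_n b_n < ∞, such that E[A_{n+1} | F_n] ≥ (1 - b_n) A_n for all n. Then (c_n A_n)_n with c_n = Π_{k=1}^n (1 - b_k)^{-1} is a submartingale, the constants c_n converge to a finite positive limit, and if sup_n E[A_n] < ∞ then (A_n) converges almost surely. -/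
/-!
The products `c n = ∏ k < n, (1 - b k)⁻¹` converge to `exp (-∑' k, log (1 - b k)) > 0`, the
series of logarithms being summable together with `b`. Since `c n = c (n + 1) * (1 - b n)`, the
hypothesis on `A` says exactly that `c n * A n` is a submartingale; it is L¹-bounded because `c` is
bounded, so it converges a.e., and so does `A n = (c n)⁻¹ * (c n * A n)`.
-/

open MeasureTheory Filter Finset
open scoped Topology NNReal

lemma tendsto_prod_range_inv_one_sub {b : ℕ → ℝ} (hb : ∀ n, b n < 1) (hsum : Summable b) :
    ∃ L : ℝ, 0 < L ∧ Tendsto (fun n => ∏ k ∈ range n, (1 - b k)⁻¹) atTop (𝓝 L) := by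
  have hpos : ∀ n, 0 < (1 - b n)⁻¹ := fun n => inv_pos.2 (sub_pos.2 (hb n))
  have hlog : Summable fun n => Real.log (1 - b n)⁻¹ := by
    simpa only [Real.log_inv, sub_eq_add_neg] using
      (Real.summable_log_one_add_of_summable hsum.neg).neg
  exact ⟨_, Real.exp_pos _, (Real.hasProd_of_hasSum_log hpos hlog.hasSum).tendsto_prod_nat⟩

section

variable {Ω : Type*} {m0 : MeasurableSpace Ω} {P : Measure Ω} {ℱ : Filtration ℕ m0}
  {A : ℕ → Ω → ℝ}

theorem submartingale_prod_inv_mul [IsFiniteMeasure P] {r : ℕ → ℝ} (hr : ∀ n, 0 < r n)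
    (hadapted : Adapted ℱ A) (hint : ∀ n, Integrable (A n) P)
    (hcond : ∀ n, (fun ω => r n * A n ω) ≤ᵐ[P] P[A (n + 1)|ℱ n]) :
    Submartingale (fun n ω => (∏ k ∈ range n, (r k)⁻¹) * A n ω) ℱ P := by
  set c : ℕ → ℝ := fun n => ∏ k ∈ range n, (r k)⁻¹
  have hc : ∀ n, 0 < c n := fun n => prod_pos fun k _ => inv_pos.2 (hr k)
  have hc_succ : ∀ n, c n = c (n + 1) * r n := fun n => by
    simp only [c, prod_range_succ, mul_assoc, inv_mul_cancel₀ (hr n).ne', mul_one]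
  refine submartingale_nat (fun n => ((hadapted n).const_mul (c n)).stronglyMeasurable)
    (fun n => (hint n).const_mul (c n)) fun n => ?_
  filter_upwards [condExp_smul (μ := P) (c (n + 1)) (A (n + 1)) (ℱ n), hcond n] with ω hsmul hle
  calc c n * A n ω = c (n + 1) * (r n * A n ω) := by rw [hc_succ, mul_assoc]
    _ ≤ c (n + 1) * P[A (n + 1)|ℱ n] ω := mul_le_mul_of_nonneg_left hle (hc _).le
    _ = P[fun ω => c (n + 1) * A (n + 1) ω|ℱ n] ω := hsmul.symm

lemma eLpNorm_one_eq_ofReal_integral {f : Ω → ℝ} (hf : Integrable f P) (h0 : 0 ≤ᵐ[P] f) :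
    eLpNorm f 1 P = ENNReal.ofReal (∫ ω, f ω ∂P) := by
  rw [eLpNorm_one_eq_lintegral_enorm, ofReal_integral_eq_lintegral_ofReal hf h0]
  refine lintegral_congr_ae ?_
  filter_upwards [h0] with ω hω using Real.enorm_of_nonneg hω

lemma eLpNorm_one_const_mul_le {f : Ω → ℝ} (hf : Integrable f P) (h0 : 0 ≤ᵐ[P] f)
    {a M B : ℝ} (ha : |a| ≤ M) (hB : ∫ ω, f ω ∂P ≤ B) :
    eLpNorm (fun ω => a * f ω) 1 P ≤ ENNReal.ofReal (M * B) := by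
  have hsmul : eLpNorm (a • f) 1 P = ENNReal.ofReal (|a| * ∫ ω, f ω ∂P) := by
    rw [eLpNorm_const_smul, eLpNorm_one_eq_ofReal_integral hf h0,
      ENNReal.ofReal_mul (abs_nonneg a), Real.enorm_eq_ofReal_abs]
  refine (hsmul.trans_le (ENNReal.ofReal_le_ofReal ?_))
  exact mul_le_mul ha hB (integral_nonneg_of_ae h0) ((abs_nonneg a).trans ha)

theorem ae_exists_tendsto_of_submartingale_mul [IsFiniteMeasure P] {c : ℕ → ℝ} {L : ℝ}
    (hc : Tendsto c atTop (𝓝 L)) (hL : L ≠ 0)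
    (hsub : Submartingale (fun n ω => c n * A n ω) ℱ P) {R : ℝ≥0}
    (hbdd : ∀ n, eLpNorm (fun ω => c n * A n ω) 1 P ≤ R) :
    ∀ᵐ ω ∂P, ∃ l : ℝ, Tendsto (fun n => A n ω) atTop (𝓝 l) := by
  filter_upwards [hsub.exists_ae_tendsto_of_bdd hbdd] with ω ⟨l, hl⟩
  refine ⟨L⁻¹ * l, ((hc.inv₀ hL).mul hl).congr' ?_⟩
  filter_upwards [hc.eventually_ne hL] with n hn using inv_mul_cancel_left₀ hn _

end

theorem stmt16 {Ω : Type*} [m0 : MeasurableSpace Ω] (P : Measure Ω)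
    [IsProbabilityMeasure P] (ℱ : MeasureTheory.Filtration ℕ m0)
    (A : ℕ → Ω → ℝ) (b : ℕ → ℝ)
    (hb : ∀ n, 0 ≤ b n ∧ b n < 1) (hsum : Summable b)
    (hadapted : MeasureTheory.Adapted ℱ A)
    (hnonneg : ∀ n ω, 0 ≤ A n ω)
    (hint : ∀ n, Integrable (A n) P)
    (hcond : ∀ n, (fun ω => (1 - b n) * A n ω) ≤ᵐ[P] P[A (n + 1)|ℱ n]) :
    Submartingale (fun n ω => (∏ k ∈ Finset.range n, (1 - b k)⁻¹) * A n ω) ℱ P ∧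
    (∃ L : ℝ, 0 < L ∧
      Tendsto (fun n => ∏ k ∈ Finset.range n, (1 - b k)⁻¹) atTop (𝓝 L)) ∧
    ((∃ B : ℝ, ∀ n, ∫ ω, A n ω ∂P ≤ B) →
      ∀ᵐ ω ∂P, ∃ l : ℝ, Tendsto (fun n => A n ω) atTop (𝓝 l)) := by
  have hsub := submartingale_prod_inv_mul (fun n => sub_pos.2 (hb n).2) hadapted hint hcond
  obtain ⟨L, hL, hc⟩ := tendsto_prod_range_inv_one_sub (fun n => (hb n).2) hsum
  refine ⟨hsub, ⟨L, hL, hc⟩, fun ⟨B, hB⟩ => ?_⟩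
  obtain ⟨M, hM⟩ := hc.abs.bddAbove_range
  exact ae_exists_tendsto_of_submartingale_mul hc hL.ne' hsub (R := (M * B).toNNReal)
    fun n => eLpNorm_one_const_mul_le (hint n) (ae_of_all _ (hnonneg n))
      (hM ⟨n, rfl⟩) (hB n)
end

section
/- Let X be a nonnegative random variable and α ∈ (0,1), q ∈ (0,1). If Y satisfies E[e^{-uY}] = E[e^{-(Γ(1-α)/α) u^α X}] for all u ≥ 0 and there exist constants c, C > 0 with c λ^{ξ(q/α)} ≤ E[X_λ^{q/α}] ≤ C λ^{ξ(q/α)} as λ → 0 for a family (X_λ) (with associated Y_λ), then E[Y_λ^q] ≍ λ^{ξ(q/α)} as λ → 0, with explicit ratio constant (Γ(1-q/α) Γ(1-α)^{q/α}) / (Γ(1-q) α^{q/α}). -/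
/-!
For `a, y ≥ 0` and `0 < q < β`, writing `1 - e^{-s} = ∫₀^s e^{-t} dt` and exchanging the order of
integration gives `∫₀^∞ (1 - e^{-a y u^β}) u^{-1-q} du = Γ(1 - q/β) (a y)^{q/β} / q`.
Averaging this over `ω` with `β = 1` for `Y` and `β = α`, `a = Γ(1-α)/α` for `X`, the Laplace
identity says that the two left-hand sides agree, which is the moment identity; the two-sided
bounds then transfer through the positive constant.
-/

open MeasureTheory Real Set

lemma lintegral_Ioc_mul_exp_neg_mul {a b : ℝ} (ha : 0 ≤ a) (hb : 0 ≤ b) :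
    ∫⁻ t in Ioc 0 b, ENNReal.ofReal (a * exp (-(a * t))) =
      ENNReal.ofReal (1 - exp (-(a * b))) := by
  have hderiv (t : ℝ) : HasDerivAt (fun t => -exp (-(a * t))) (a * exp (-(a * t))) t := by
    have h : HasDerivAt (fun t : ℝ => -exp (-(a * t))) _ t :=
      ((hasDerivAt_id' t).const_mul a).fun_neg.exp.fun_neg
    simpa [mul_comm] using h
  have hcont : Continuous fun t => a * exp (-(a * t)) := by fun_prop
  rw [← ofReal_integral_eq_lintegral_ofReal hcont.integrableOn_Ioc
      (ae_of_all _ fun t => by positivity), ← intervalIntegral.integral_of_le hb,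
    intervalIntegral.integral_eq_sub_of_hasDerivAt (fun t _ => hderiv t)
      (hcont.intervalIntegrable 0 b)]
  congr 1
  simp
  ring

lemma lintegral_Ici_rpow_of_lt {p b : ℝ} (hp : p < -1) (hb : 0 < b) :
    ∫⁻ u in Ici b, ENNReal.ofReal (u ^ p) = ENNReal.ofReal (-b ^ (p + 1) / (p + 1)) := by
  rw [← setLIntegral_congr Ioi_ae_eq_Ici,
    ← ofReal_integral_eq_lintegral_ofReal (integrableOn_Ioi_rpow_of_lt hp hb),
    integral_Ioi_rpow_of_lt hp hb]
  filter_upwards [self_mem_ae_restrict measurableSet_Ioi] with u hu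
    using rpow_nonneg (hb.trans hu).le _

lemma lintegral_Ioi_mul_exp_neg_mul_mul_rpow_neg {a s : ℝ} (ha : 0 < a) (hs : s < 1) :
    ∫⁻ t in Ioi 0, ENNReal.ofReal (a * exp (-(a * t))) * ENNReal.ofReal (t ^ (-s)) =
      ENNReal.ofReal (a ^ s * Gamma (1 - s)) := by
  have hint : IntegrableOn (fun t => t ^ ((1 - s) - 1) * exp (-(a * t))) (Ioi 0) := by
    simpa using integrableOn_rpow_mul_exp_neg_mul_rpow (s := -s) (by linarith) one_pos ha
  calc ∫⁻ t in Ioi 0, ENNReal.ofReal (a * exp (-(a * t))) * ENNReal.ofReal (t ^ (-s))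
      = ∫⁻ t in Ioi 0, ENNReal.ofReal (a * (t ^ ((1 - s) - 1) * exp (-(a * t)))) := by
        refine lintegral_congr fun t => ?_
        rw [← ENNReal.ofReal_mul (by positivity), sub_sub_cancel_left, mul_comm (t ^ _),
          mul_assoc]
    _ = ENNReal.ofReal (a * ((1 / a) ^ (1 - s) * Gamma (1 - s))) := by
        rw [← ofReal_integral_eq_lintegral_ofReal (hint.const_mul a), integral_const_mul,
          integral_rpow_mul_exp_neg_mul_Ioi (by linarith) ha]
        filter_upwards [self_mem_ae_restrict measurableSet_Ioi] with t ht
        have : (0 : ℝ) < t := ht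
        positivity
    _ = ENNReal.ofReal (a ^ s * Gamma (1 - s)) := by
        rw [one_div, inv_rpow ha.le, rpow_sub ha, rpow_one, ← mul_assoc]
        field_simp

lemma lintegral_Ioi_one_sub_exp_neg_mul_rpow {a q β : ℝ} (ha : 0 ≤ a) (hq : 0 < q)
    (hqβ : q < β) :
    ∫⁻ u in Ioi 0, ENNReal.ofReal (1 - exp (-(a * u ^ β))) * ENNReal.ofReal (u ^ (-1 - q)) =
      ENNReal.ofReal (Gamma (1 - q / β) / q * a ^ (q / β)) := by
  have hβ : 0 < β := hq.trans hqβ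
  have hqβ' : q / β < 1 := (div_lt_one hβ).mpr hqβ
  rcases ha.eq_or_lt with rfl | ha
  · simp [zero_rpow (div_pos hq hβ).ne']
  set S : Set (ℝ × ℝ) := {p | p.2 ≤ p.1 ^ β}
  have hS : MeasurableSet S := measurableSet_le measurable_snd (measurable_fst.pow_const β)
  set F : ℝ × ℝ → ENNReal := fun p =>
    ENNReal.ofReal (a * exp (-(a * p.2))) * ENNReal.ofReal (p.1 ^ (-1 - q))
  have hF : Measurable F := by fun_prop
  calc ∫⁻ u in Ioi 0, ENNReal.ofReal (1 - exp (-(a * u ^ β))) * ENNReal.ofReal (u ^ (-1 - q))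
      = ∫⁻ u in Ioi 0, ∫⁻ t in Ioi 0, S.indicator F (u, t) := by
        refine setLIntegral_congr_fun measurableSet_Ioi fun u (hu : 0 < u) => ?_
        change _ = ∫⁻ t in Ioi 0, (Iic (u ^ β)).indicator (fun t => F (u, t)) t
        rw [lintegral_indicator measurableSet_Iic, Measure.restrict_restrict measurableSet_Iic,
          Iic_inter_Ioi]
        simp only [F]
        rw [lintegral_mul_const' _ _ ENNReal.ofReal_ne_top,
          lintegral_Ioc_mul_exp_neg_mul ha.le (rpow_nonneg hu.le β)]
    _ = ∫⁻ t in Ioi 0, ∫⁻ u in Ioi 0, S.indicator F (u, t) :=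
        lintegral_lintegral_swap ((hF.indicator hS).aemeasurable)
    _ = ∫⁻ t in Ioi 0, ENNReal.ofReal q⁻¹ *
          (ENNReal.ofReal (a * exp (-(a * t))) * ENNReal.ofReal (t ^ (-(q / β)))) := by
        refine setLIntegral_congr_fun measurableSet_Ioi fun t (ht : 0 < t) => ?_
        have hroot : 0 < t ^ β⁻¹ := rpow_pos_of_pos ht _
        have hmem : ∀ u ∈ Ioi (0 : ℝ), S.indicator F (u, t) =
            (Ici (t ^ β⁻¹)).indicator (fun u => F (u, t)) u := fun u (hu : 0 < u) => by
          simp only [indicator, S, mem_ofPred_eq, mem_Ici,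
            rpow_inv_le_iff_of_pos ht.le hu.le hβ]
        rw [setLIntegral_congr_fun measurableSet_Ioi hmem, lintegral_indicator measurableSet_Ici,
          Measure.restrict_restrict measurableSet_Ici,
          inter_eq_self_of_subset_left (Ici_subset_Ioi.mpr hroot)]
        simp only [F]
        rw [lintegral_const_mul' _ _ ENNReal.ofReal_ne_top,
          lintegral_Ici_rpow_of_lt (by linarith) hroot, mul_left_comm]
        congr 1
        rw [← ENNReal.ofReal_mul (by positivity), show -1 - q + 1 = -q by ring, ← rpow_mul ht.le]
        congr 1
        field_simp
    _ = ENNReal.ofReal (Gamma (1 - q / β) / q * a ^ (q / β)) := by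
        rw [lintegral_const_mul' _ _ ENNReal.ofReal_ne_top,
          lintegral_Ioi_mul_exp_neg_mul_mul_rpow_neg ha hqβ', ← ENNReal.ofReal_mul (by positivity)]
        congr 1
        ring

section Laplace

variable {Ω : Type*} [MeasurableSpace Ω] (P : Measure Ω) [IsProbabilityMeasure P]

lemma ofReal_one_sub_integral_exp_neg {f : Ω → ℝ} (hfm : Measurable f) (hf : ∀ ω, 0 ≤ f ω) :
    ENNReal.ofReal (1 - ∫ ω, exp (-f ω) ∂P) = ∫⁻ ω, ENNReal.ofReal (1 - exp (-f ω)) ∂P := by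
  have hle (ω : Ω) : exp (-f ω) ≤ 1 := exp_le_one_iff.mpr (neg_nonpos.mpr (hf ω))
  have hint : Integrable (fun ω => exp (-f ω)) P :=
    (integrable_const (1 : ℝ)).mono' (by fun_prop) (ae_of_all _ fun ω => by
      rw [norm_of_nonneg (exp_pos _).le]; exact hle ω)
  have hsub : 1 - ∫ ω, exp (-f ω) ∂P = ∫ ω, (1 - exp (-f ω)) ∂P := by
    simp [integral_sub (integrable_const 1) hint]
  have hint' : Integrable (fun ω => 1 - exp (-f ω)) P := (integrable_const 1).sub hint
  rw [hsub, ofReal_integral_eq_lintegral_ofReal hint'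
      (ae_of_all _ fun ω => sub_nonneg.mpr (hle ω))]

lemma lintegral_one_sub_laplace_mul_rpow {Z : Ω → ℝ} (hZm : Measurable Z) (hZ : ∀ ω, 0 ≤ Z ω)
    {a q β : ℝ} (ha : 0 ≤ a) (hq : 0 < q) (hqβ : q < β) :
    ∫⁻ u in Ioi 0, ENNReal.ofReal (1 - ∫ ω, exp (-(a * u ^ β * Z ω)) ∂P) *
        ENNReal.ofReal (u ^ (-1 - q)) =
      ENNReal.ofReal (Gamma (1 - q / β) / q * a ^ (q / β)) *
        ∫⁻ ω, ENNReal.ofReal (Z ω ^ (q / β)) ∂P := by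
  have hG : 0 < Gamma (1 - q / β) :=
    Gamma_pos_of_pos (sub_pos.mpr ((div_lt_one (hq.trans hqβ)).mpr hqβ))
  calc _ = ∫⁻ u in Ioi 0, (∫⁻ ω, ENNReal.ofReal (1 - exp (-(a * Z ω * u ^ β))) *
          ENNReal.ofReal (u ^ (-1 - q)) ∂P) := by
        refine setLIntegral_congr_fun measurableSet_Ioi fun u (hu : 0 < u) => ?_
        rw [lintegral_mul_const' _ _ ENNReal.ofReal_ne_top, ofReal_one_sub_integral_exp_neg P
          (by fun_prop) fun ω => mul_nonneg (by positivity) (hZ ω)]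
        simp only [mul_right_comm a]
    _ = ∫⁻ ω, (∫⁻ u in Ioi 0, ENNReal.ofReal (1 - exp (-(a * Z ω * u ^ β))) *
          ENNReal.ofReal (u ^ (-1 - q))) ∂P :=
        lintegral_lintegral_swap (by fun_prop)
    _ = ∫⁻ ω, ENNReal.ofReal (Gamma (1 - q / β) / q * a ^ (q / β)) *
          ENNReal.ofReal (Z ω ^ (q / β)) ∂P := by
        refine lintegral_congr fun ω => ?_
        rw [lintegral_Ioi_one_sub_exp_neg_mul_rpow (mul_nonneg ha (hZ ω)) hq hqβ,
          mul_rpow ha (hZ ω), ← mul_assoc, ENNReal.ofReal_mul (by positivity)]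
    _ = _ := lintegral_const_mul' _ _ ENNReal.ofReal_ne_top

theorem lintegral_rpow_eq_of_laplace_eq {X Y : Ω → ℝ} (hXm : Measurable X) (hYm : Measurable Y)
    (hX : ∀ ω, 0 ≤ X ω) (hY : ∀ ω, 0 ≤ Y ω) {a q β : ℝ} (ha : 0 ≤ a) (hq0 : 0 < q)
    (hq1 : q < 1) (hqβ : q < β)
    (hLap : ∀ u, 0 ≤ u → ∫ ω, exp (-(u * Y ω)) ∂P = ∫ ω, exp (-(a * u ^ β * X ω)) ∂P) :
    ∫⁻ ω, ENNReal.ofReal (Y ω ^ q) ∂P =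
      ENNReal.ofReal (Gamma (1 - q / β) * a ^ (q / β) / Gamma (1 - q)) *
        ∫⁻ ω, ENNReal.ofReal (X ω ^ (q / β)) ∂P := by
  have hG : 0 < Gamma (1 - q) := Gamma_pos_of_pos (by linarith)
  have hYmoment := lintegral_one_sub_laplace_mul_rpow P hYm hY zero_le_one hq0 hq1
  have hXmoment := lintegral_one_sub_laplace_mul_rpow P hXm hX ha hq0 hqβ
  simp only [one_mul, rpow_one, div_one, one_rpow, mul_one] at hYmoment
  have hcomp : ENNReal.ofReal (Gamma (1 - q) / q) * ∫⁻ ω, ENNReal.ofReal (Y ω ^ q) ∂P =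
      ENNReal.ofReal (Gamma (1 - q / β) / q * a ^ (q / β)) *
        ∫⁻ ω, ENNReal.ofReal (X ω ^ (q / β)) ∂P := by
    rw [← hYmoment, ← hXmoment]
    refine setLIntegral_congr_fun measurableSet_Ioi fun u (hu : 0 < u) => ?_
    rw [hLap u hu.le]
  rw [← ENNReal.mul_right_inj (ENNReal.ofReal_pos.mpr (div_pos hG hq0)).ne' ENNReal.ofReal_ne_top,
    hcomp, ← mul_assoc, ← ENNReal.ofReal_mul (div_pos hG hq0).le]
  congr 2
  field_simp

theorem integral_rpow_eq_of_laplace_eq {X Y : Ω → ℝ} (hXm : Measurable X) (hYm : Measurable Y)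
    (hX : ∀ ω, 0 ≤ X ω) (hY : ∀ ω, 0 ≤ Y ω) {a q β : ℝ} (ha : 0 ≤ a) (hq0 : 0 < q)
    (hq1 : q < 1) (hqβ : q < β)
    (hLap : ∀ u, 0 ≤ u → ∫ ω, exp (-(u * Y ω)) ∂P = ∫ ω, exp (-(a * u ^ β * X ω)) ∂P) :
    ∫ ω, Y ω ^ q ∂P =
      Gamma (1 - q / β) * a ^ (q / β) / Gamma (1 - q) * ∫ ω, X ω ^ (q / β) ∂P := by
  have hGβ : 0 < Gamma (1 - q / β) :=
    Gamma_pos_of_pos (sub_pos.mpr ((div_lt_one (hq0.trans hqβ)).mpr hqβ))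
  have hG : 0 < Gamma (1 - q) := Gamma_pos_of_pos (sub_pos.mpr hq1)
  rw [integral_eq_lintegral_of_nonneg_ae (ae_of_all _ fun ω => rpow_nonneg (hY ω) q)
      (hYm.pow_const q).aestronglyMeasurable,
    integral_eq_lintegral_of_nonneg_ae (ae_of_all _ fun ω => rpow_nonneg (hX ω) _)
      (hXm.pow_const _).aestronglyMeasurable,
    lintegral_rpow_eq_of_laplace_eq P hXm hYm hX hY ha hq0 hq1 hqβ hLap, ENNReal.toReal_mul,
    ENNReal.toReal_ofReal (by positivity)]

end Laplace

theorem stmt18_general {Ω : Type*} [MeasurableSpace Ω] (P : Measure Ω) [IsProbabilityMeasure P]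
    (α q : ℝ) (hα : α ∈ Set.Ioo (0:ℝ) 1) (hq : q ∈ Set.Ioo (0:ℝ) 1) (hqα : q < α)
    (X Y : ℝ → Ω → ℝ)
    (hXm : ∀ lam, Measurable (X lam)) (hYm : ∀ lam, Measurable (Y lam))
    (hXpos : ∀ lam ω, 0 ≤ X lam ω) (hYpos : ∀ lam ω, 0 ≤ Y lam ω)
    (hLap : ∀ lam : ℝ, ∀ u : ℝ, 0 ≤ u →
      ∫ ω, Real.exp (-(u * Y lam ω)) ∂P
        = ∫ ω, Real.exp (-(Real.Gamma (1 - α) / α * u ^ α * X lam ω)) ∂P)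
    (ξqα c C lam₀ : ℝ)
    (hbound : ∀ lam ∈ Set.Ioo (0:ℝ) lam₀,
      c * lam ^ ξqα ≤ ∫ ω, X lam ω ^ (q / α) ∂P ∧
      ∫ ω, X lam ω ^ (q / α) ∂P ≤ C * lam ^ ξqα) :
    ∀ lam ∈ Set.Ioo (0:ℝ) lam₀,
      (∫ ω, Y lam ω ^ q ∂P
          = (Real.Gamma (1 - q / α) * Real.Gamma (1 - α) ^ (q / α))
              / (Real.Gamma (1 - q) * α ^ (q / α)) * ∫ ω, X lam ω ^ (q / α) ∂P) ∧
      (Real.Gamma (1 - q / α) * Real.Gamma (1 - α) ^ (q / α))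
          / (Real.Gamma (1 - q) * α ^ (q / α)) * c * lam ^ ξqα
        ≤ ∫ ω, Y lam ω ^ q ∂P ∧
      ∫ ω, Y lam ω ^ q ∂P
        ≤ (Real.Gamma (1 - q / α) * Real.Gamma (1 - α) ^ (q / α))
            / (Real.Gamma (1 - q) * α ^ (q / α)) * C * lam ^ ξqα := by
  intro lam hlam
  obtain ⟨hα0, hα1⟩ := hα
  have hGα : 0 < Gamma (1 - α) := Gamma_pos_of_pos (sub_pos.mpr hα1)
  have hGq : 0 < Gamma (1 - q) := Gamma_pos_of_pos (sub_pos.mpr hq.2)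
  have hGqα : 0 < Gamma (1 - q / α) := Gamma_pos_of_pos (sub_pos.mpr ((div_lt_one hα0).mpr hqα))
  have hmoment := integral_rpow_eq_of_laplace_eq P (hXm lam) (hYm lam) (hXpos lam) (hYpos lam)
    (div_pos hGα hα0).le hq.1 hq.2 hqα (hLap lam)
  rw [div_rpow hGα.le hα0.le, mul_div_assoc', div_div, mul_comm (α ^ _)] at hmoment
  obtain ⟨hlow, hup⟩ := hbound lam hlam
  refine ⟨hmoment, ?_, ?_⟩ <;> rw [hmoment, mul_assoc] <;> gcongr

theorem stmt18 {Ω : Type*} [MeasurableSpace Ω] (P : Measure Ω) [IsProbabilityMeasure P]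
    (α q : ℝ) (hα : α ∈ Set.Ioo (0:ℝ) 1) (hq : q ∈ Set.Ioo (0:ℝ) 1) (hqα : q < α)
    (X Y : ℝ → Ω → ℝ)
    (hXm : ∀ lam, Measurable (X lam)) (hYm : ∀ lam, Measurable (Y lam))
    (hXpos : ∀ lam ω, 0 ≤ X lam ω) (hYpos : ∀ lam ω, 0 ≤ Y lam ω)
    (hLap : ∀ lam : ℝ, ∀ u : ℝ, 0 ≤ u →
      ∫ ω, Real.exp (-(u * Y lam ω)) ∂P
        = ∫ ω, Real.exp (-(Real.Gamma (1 - α) / α * u ^ α * X lam ω)) ∂P)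
    (hInt : ∀ lam, Integrable (fun ω => X lam ω ^ (q / α)) P)
    (ξqα c C lam₀ : ℝ) (hc : 0 < c) (hC : 0 < C) (hlam₀ : 0 < lam₀)
    (hbound : ∀ lam ∈ Set.Ioo (0:ℝ) lam₀,
      c * lam ^ ξqα ≤ ∫ ω, X lam ω ^ (q / α) ∂P ∧
      ∫ ω, X lam ω ^ (q / α) ∂P ≤ C * lam ^ ξqα) :
    ∀ lam ∈ Set.Ioo (0:ℝ) lam₀,
      (∫ ω, Y lam ω ^ q ∂P
          = (Real.Gamma (1 - q / α) * Real.Gamma (1 - α) ^ (q / α))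
              / (Real.Gamma (1 - q) * α ^ (q / α)) * ∫ ω, X lam ω ^ (q / α) ∂P) ∧
      (Real.Gamma (1 - q / α) * Real.Gamma (1 - α) ^ (q / α))
          / (Real.Gamma (1 - q) * α ^ (q / α)) * c * lam ^ ξqα
        ≤ ∫ ω, Y lam ω ^ q ∂P ∧
      ∫ ω, Y lam ω ^ q ∂P
        ≤ (Real.Gamma (1 - q / α) * Real.Gamma (1 - α) ^ (q / α))
            / (Real.Gamma (1 - q) * α ^ (q / α)) * C * lam ^ ξqα :=
  stmt18_general P α q hα hq hqα X Y hXm hYm hXpos hYpos hLap ξqα c C lam₀ hbound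
end
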